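/- arXiv:0903.5457 — 3 statements merged into one kernel-verified Lean document; each statement's English description precedes it below -/
import Mathlib

section
/- Let H0 be a self-adjoint operator with H0 ≥ 1, D = D^∞(H0), and Q^0_L = E([1,L]) its spectral projections. Then the regularized Hamiltonians H_L := Q^0_L H0 Q^0_L converge to H0 with respect to the quasi-uniform topology τ_*^D on L†(D); that is, for every f ∈ F and every k ∈ ℕ∪{0}, both ‖H0^k (H_L − H0) f(H0)‖ → 0 and ‖f(H0)(H_L − H0) H0^k‖ → 0 as L → ∞. -/
/-
Through the functional calculus `Φ`, both `H₀ᵏ (H_L - H₀) f(H₀)` and, on `C^∞`-vectors,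
`f(H₀) (H_L - H₀) H₀ᵏ` are the operator `Φ (fun t => tᵏ (χ_L(t)² - 1) t f(t))`, where `χ_L`
is the indicator of `[1, L]`.
That function vanishes on `[1, L]` and is bounded by `sup_t t^(k+2) f(t) / L` beyond, so
the bound `‖Φ h‖ ≤ sup_{t ≥ 1} |h t|` gives convergence at rate `O(1/L)`.
-/

open scoped ComplexInnerProductSpace

namespace Paper

/-- An unbounded linear operator in a Hilbert space `𝓗`, encoded by a distinguished
domain together with a globally defined linear extension of its action. -/
structure Op (𝓗 : Type*) [NormedAddCommGroup 𝓗] [InnerProductSpace ℂ 𝓗] where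
  dom : Submodule ℂ 𝓗
  op : 𝓗 →ₗ[ℂ] 𝓗

variable {𝓗 : Type*} [NormedAddCommGroup 𝓗] [InnerProductSpace ℂ 𝓗]

namespace Op

/-- `T.pw k` is the `k`-th power `T^k` of `T`, as a function. -/
def pw (T : Op 𝓗) (k : ℕ) : 𝓗 → 𝓗 := (fun x => T.op x)^[k]

/-- The domain `D(Tⁿ)` of the `n`-th power of `T`. -/
def domPow (T : Op 𝓗) : ℕ → Set 𝓗
  | 0 => Set.univ
  | n + 1 => {x | x ∈ T.dom ∧ T.op x ∈ T.domPow n}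

/-- The set of C^∞-vectors `D^∞(T) = ⋂ₙ D(Tⁿ)`. -/
def Dinf (T : Op 𝓗) : Set 𝓗 := ⋂ n : ℕ, T.domPow n

/-- `T` is symmetric. -/
def Symmetric (T : Op 𝓗) : Prop :=
  ∀ x ∈ T.dom, ∀ y ∈ T.dom, ⟪T.op x, y⟫ = ⟪x, T.op y⟫

/-- Self-adjointness: densely defined, symmetric, and every vector in the domain of the
adjoint already belongs to the domain (on which the adjoint acts as the operator). -/
def IsSelfAdjoint (T : Op 𝓗) : Prop :=
  Dense (T.dom : Set 𝓗) ∧ T.Symmetric ∧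
    ∀ y z : 𝓗, (∀ x ∈ T.dom, ⟪T.op x, y⟫ = ⟪x, z⟫) → y ∈ T.dom ∧ T.op y = z

/-- `T ≥ 1`. -/
def GeOne (T : Op 𝓗) : Prop := ∀ x ∈ T.dom, ‖x‖ ^ 2 ≤ (⟪T.op x, x⟫).re

/-- The perturbed operator `T + B`, with domain `D(T)`. -/
def pert (T B : Op 𝓗) : Op 𝓗 := ⟨T.dom, T.op + B.op⟩

/-- The graph topology `t_T` on a subset `D`, generated by the seminorms `φ ↦ ‖Tⁿφ‖`,
i.e. the initial topology for the maps `φ ↦ Tⁿφ`. -/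
def graphTopOn (T : Op 𝓗) (D : Set 𝓗) : TopologicalSpace D :=
  ⨅ n : ℕ, TopologicalSpace.induced (fun φ : D => T.pw n ↑φ) inferInstance

end Op

/-- `D0` is a core for the `k`-th power of `T`. -/
def IsCorePow (T : Op 𝓗) (k : ℕ) (D0 : Set 𝓗) : Prop :=
  D0 ⊆ T.domPow k ∧ ∀ x ∈ T.domPow k, ∃ u : ℕ → 𝓗, (∀ n, u n ∈ D0) ∧
    Filter.Tendsto u Filter.atTop (nhds x) ∧
    Filter.Tendsto (fun n => T.pw k (u n)) Filter.atTop (nhds (T.pw k x))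

/-- Membership in the O*-algebra `L†(D)`: `A` maps `D` into `D`, `D ⊆ D(A*)` and
`A* D ⊆ D` (witnessed by `Adag`). -/
def MemLdag (D : Set 𝓗) (A : 𝓗 →ₗ[ℂ] 𝓗) : Prop :=
  (∀ x ∈ D, A x ∈ D) ∧
    ∃ Adag : 𝓗 →ₗ[ℂ] 𝓗, (∀ x ∈ D, Adag x ∈ D) ∧
      ∀ x ∈ D, ∀ y ∈ D, ⟪A x, y⟫ = ⟪x, Adag y⟫

/-- The operator norm of (the bounded extension of) `A`, computed on the unit ball of `D`. -/
noncomputable def opNormOn (D : Set 𝓗) (A : 𝓗 → 𝓗) : ℝ :=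
  ⨆ φ : {ψ : 𝓗 // ψ ∈ D ∧ ‖ψ‖ ≤ 1}, ‖A ↑φ‖

/-- The class `F` of positive, bounded, continuous functions on `[0,∞)` which decrease
faster than any inverse power of `x`. -/
def IsInF (f : ℝ → ℝ) : Prop :=
  Continuous f ∧ (∀ x : ℝ, 0 ≤ x → 0 < f x) ∧
    ∀ k : ℕ, ∃ M : ℝ, ∀ x : ℝ, 0 ≤ x → x ^ k * f x ≤ M

/-- The bounded measurable functional calculus of a self-adjoint operator `T` whose
spectrum is contained in `[a, ∞)`. -/
structure FnCalc (T : Op 𝓗) (a : ℝ) where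
  Φ : (ℝ → ℝ) → (𝓗 →L[ℂ] 𝓗)
  Φ_one : Φ (fun _ => 1) = 1
  Φ_add : ∀ f g : ℝ → ℝ, Measurable f → Measurable g →
    Φ (fun t => f t + g t) = Φ f + Φ g
  Φ_mul : ∀ f g : ℝ → ℝ, Measurable f → Measurable g →
    Φ (fun t => f t * g t) = (Φ f).comp (Φ g)
  Φ_symm : ∀ (f : ℝ → ℝ) (x y : 𝓗), ⟪Φ f x, y⟫ = ⟪x, Φ f y⟫
  Φ_norm : ∀ (f : ℝ → ℝ) (M : ℝ), (∀ t : ℝ, a ≤ t → |f t| ≤ M) →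
    ∀ x : 𝓗, ‖Φ f x‖ ≤ M * ‖x‖
  Φ_supp : ∀ f : ℝ → ℝ, Measurable f → (∀ t : ℝ, a ≤ t → f t = 0) → Φ f = 0
  Φ_pos : ∀ f : ℝ → ℝ, Measurable f → (∀ t : ℝ, a ≤ t → 0 ≤ f t) →
    ∀ x : 𝓗, 0 ≤ (⟪Φ f x, x⟫).re
  Φ_dom : ∀ f : ℝ → ℝ, Measurable f → (∃ M : ℝ, ∀ t : ℝ, a ≤ t → |t * f t| ≤ M) →
    ∀ x : 𝓗, Φ f x ∈ T.dom ∧ T.op (Φ f x) = Φ (fun t => t * f t) x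
  Q_tendsto : ∀ x : 𝓗, Filter.Tendsto
    (fun L : ℝ => Φ (Set.indicator (Set.Icc a L) fun _ => (1 : ℝ)) x)
    Filter.atTop (nhds x)

/-- The spectral projection `Q_L = E([a, L])` of `T`. -/
noncomputable def FnCalc.Q {T : Op 𝓗} {a : ℝ} (c : FnCalc T a) (L : ℝ) : 𝓗 →L[ℂ] 𝓗 :=
  c.Φ (Set.indicator (Set.Icc a L) fun _ => (1 : ℝ))

/-- The seminorm `A ↦ max{‖Tᵏ A f(T)‖, ‖f(T) A Tᵏ‖}` of the quasi-uniform topology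
`τ_*` on `L†(D)`. -/
noncomputable def qseminorm {T : Op 𝓗} {a : ℝ} (c : FnCalc T a) (D : Set 𝓗)
    (f : ℝ → ℝ) (k : ℕ) (A : 𝓗 →ₗ[ℂ] 𝓗) : ℝ :=
  max (opNormOn D fun φ => T.pw k (A (c.Φ f φ)))
      (opNormOn D fun φ => c.Φ f (A (T.pw k φ)))

/-- `i[A,T] = i(A T - T A)`, as a function. -/
noncomputable def commI (A T : 𝓗 → 𝓗) : 𝓗 → 𝓗 :=
  fun φ => Complex.I • (A (T φ) - T (A φ))

/-- Iterated commutators: `itComm A B j = [A, B]_j`, with `[A,B]_0 = B` and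
`[A,B]_{j+1} = [A, [A,B]_j]`. -/
def itComm (A B : 𝓗 → 𝓗) : ℕ → (𝓗 → 𝓗)
  | 0 => B
  | j + 1 => fun φ => A (itComm A B j φ) - itComm A B j (A φ)

section Regularization

open Filter Topology

namespace Op

variable {T : Op 𝓗}

theorem pw_succ' (k : ℕ) (x : 𝓗) : T.pw (k + 1) x = T.op (T.pw k x) :=
  Function.iterate_succ_apply' _ k x

theorem pw_mem_domPow {n k : ℕ} {x : 𝓗} (hx : x ∈ T.domPow (n + k)) :
    T.pw k x ∈ T.domPow n := by
  induction k generalizing x with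
  | zero => exact hx
  | succ k ih => exact ih hx.2

theorem pw_mem_dom_of_mem_Dinf {x : 𝓗} (hx : x ∈ T.Dinf) (k : ℕ) : T.pw k x ∈ T.dom :=
  (pw_mem_domPow (n := 1) (Set.mem_iInter.1 hx (1 + k))).1

end Op

theorem opNormOn_nonneg {E : Type*} [NormedAddCommGroup E] (D : Set E) (A : E → E) :
    0 ≤ opNormOn D A :=
  Real.iSup_nonneg fun _ => norm_nonneg _

theorem opNormOn_le {E : Type*} [NormedAddCommGroup E] {D : Set E} {A : E → E} {B : ℝ}
    (hB : 0 ≤ B) (h : ∀ x ∈ D, ‖A x‖ ≤ B * ‖x‖) : opNormOn D A ≤ B :=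
  Real.iSup_le (fun ⟨x, hxD, hx1⟩ =>
    (h x hxD).trans (mul_le_of_le_one_right hB hx1)) hB

noncomputable def cutoff (a L : ℝ) : ℝ → ℝ := Set.indicator (Set.Icc a L) fun _ => 1

section Cutoff

variable {a L t : ℝ}

theorem measurable_cutoff (a L : ℝ) : Measurable (cutoff a L) :=
  measurable_const.indicator measurableSet_Icc

theorem cutoff_of_le_of_le (ha : a ≤ t) (hL : t ≤ L) : cutoff a L t = 1 :=
  Set.indicator_of_mem (Set.mem_Icc.2 ⟨ha, hL⟩) _

theorem cutoff_of_lt (hL : L < t) : cutoff a L t = 0 :=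
  Set.indicator_of_notMem (fun h => (h.2.trans_lt hL).false) _

theorem cutoff_eq_zero_or_one (a L t : ℝ) : cutoff a L t = 0 ∨ cutoff a L t = 1 := by
  by_cases h : t ∈ Set.Icc a L
  · exact .inr (Set.indicator_of_mem h _)
  · exact .inl (Set.indicator_of_notMem h _)

theorem abs_cutoff_le_one (a L t : ℝ) : |cutoff a L t| ≤ 1 := by
  rcases cutoff_eq_zero_or_one a L t with h | h <;> simp [h]

theorem abs_cutoff_mul_self_sub_one_le (a L t : ℝ) :
    |cutoff a L t * cutoff a L t - 1| ≤ 1 := by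
  rcases cutoff_eq_zero_or_one a L t with h | h <;> simp [h]

theorem abs_mul_cutoff_le (a L t : ℝ) : |t * cutoff a L t| ≤ max |a| |L| := by
  by_cases h : t ∈ Set.Icc a L
  · simpa [cutoff, h] using abs_le_max_abs_abs h.1 h.2
  · simp [cutoff, h]

end Cutoff

def RapidDecayFrom (a : ℝ) (g : ℝ → ℝ) : Prop :=
  ∀ j : ℕ, ∃ M, ∀ t, a ≤ t → |t ^ j * g t| ≤ M

namespace RapidDecayFrom

variable {a : ℝ} {g : ℝ → ℝ}

theorem exists_abs_id_mul_le (h : RapidDecayFrom a g) : ∃ M, ∀ t, a ≤ t → |t * g t| ≤ M := by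
  simpa using h 1

theorem id_mul (h : RapidDecayFrom a g) : RapidDecayFrom a fun t => t * g t := fun j =>
  (h (j + 1)).imp fun _ hM t ht => by simpa [pow_succ, mul_assoc] using hM t ht

end RapidDecayFrom

theorem IsInF.rapidDecayFrom {f : ℝ → ℝ} (hf : IsInF f) {a : ℝ} (ha : 0 ≤ a) :
    RapidDecayFrom a f := fun j =>
  (hf.2.2 j).imp fun _ hM t ht => by
    have ht0 := ha.trans ht
    rw [abs_of_nonneg (mul_nonneg (pow_nonneg ht0 j) (hf.2.1 t ht0).le)]
    exact hM t ht0

/-- The multiplier of `(H_L - H₀) g(H₀)`, where `H_L = Q_L H₀ Q_L`. -/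
noncomputable def regDefect (a L : ℝ) (g : ℝ → ℝ) (t : ℝ) : ℝ :=
  (cutoff a L t * cutoff a L t - 1) * (t * g t)

theorem measurable_regDefect {g : ℝ → ℝ} (hg : Measurable g) (a L : ℝ) :
    Measurable (regDefect a L g) :=
  ((measurable_cutoff a L).fun_mul (measurable_cutoff a L) |>.sub measurable_const).mul
    (measurable_id'.fun_mul hg)

theorem rapidDecayFrom_regDefect {a : ℝ} {g : ℝ → ℝ} (h : RapidDecayFrom a g) (b L : ℝ) :
    RapidDecayFrom a (regDefect b L g) := fun j =>
  (h (j + 1)).imp fun M hM t ht =>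
    calc |t ^ j * regDefect b L g t|
        = |cutoff b L t * cutoff b L t - 1| * |t ^ (j + 1) * g t| := by
          rw [regDefect, ← abs_mul]; ring_nf
      _ ≤ 1 * M := mul_le_mul (abs_cutoff_mul_self_sub_one_le b L t) (hM t ht)
          (abs_nonneg _) zero_le_one
      _ = M := one_mul M

theorem abs_pow_mul_regDefect_le {a L M t : ℝ} {g : ℝ → ℝ} {k : ℕ} (hL : 0 < L)
    (hM : ∀ t, a ≤ t → |t ^ (k + 2) * g t| ≤ M) (ht : a ≤ t) :
    |t ^ k * regDefect a L g t| ≤ M / L := by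
  have hM0 : 0 ≤ M := (abs_nonneg _).trans (hM a le_rfl)
  rcases le_or_gt t L with htL | htL
  · simpa [regDefect, cutoff_of_le_of_le ht htL] using div_nonneg hM0 hL.le
  have ht0 : 0 < t := hL.trans htL
  calc |t ^ k * regDefect a L g t| = |t ^ k * regDefect a L g t| * |t| / t := by
        rw [abs_of_pos ht0, mul_div_cancel_right₀ _ ht0.ne']
    _ = |t ^ (k + 2) * g t| / t := by
        rw [← abs_mul, regDefect, cutoff_of_lt htL, ← abs_neg]; ring_nf
    _ ≤ M / t := by gcongr; exact hM t ht
    _ ≤ M / L := by gcongr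

namespace FnCalc

variable {T : Op 𝓗} {a : ℝ} (c : FnCalc T a)

theorem Q_eq (L : ℝ) : c.Q L = c.Φ (cutoff a L) := rfl

theorem Φ_sub {f g : ℝ → ℝ} (hf : Measurable f) (hg : Measurable g) :
    c.Φ (fun t => f t - g t) = c.Φ f - c.Φ g := by
  rw [eq_sub_iff_add_eq, ← c.Φ_add (fun t => f t - g t) g (hf.fun_sub hg) hg]
  simp

theorem Φ_Φ_apply {f g : ℝ → ℝ} (hf : Measurable f) (hg : Measurable g) (x : 𝓗) :
    c.Φ f (c.Φ g x) = c.Φ (fun t => f t * g t) x := by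
  rw [c.Φ_mul f g hf hg]; rfl

theorem Φ_op_apply (hT : T.Symmetric) {g : ℝ → ℝ} (hg : Measurable g)
    (hb : ∃ M, ∀ t, a ≤ t → |t * g t| ≤ M) {x : 𝓗} (hx : x ∈ T.dom) :
    c.Φ g (T.op x) = c.Φ (fun t => t * g t) x := by
  refine ext_inner_left ℂ fun u => ?_
  obtain ⟨hu, hTu⟩ := c.Φ_dom g hg hb u
  rw [← c.Φ_symm, ← hT _ hu x hx, hTu, c.Φ_symm]

theorem pw_Φ_apply (k : ℕ) {g : ℝ → ℝ} (hg : Measurable g) (hd : RapidDecayFrom a g)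
    (x : 𝓗) : T.pw k (c.Φ g x) = c.Φ (fun t => t ^ k * g t) x := by
  induction k generalizing g with
  | zero => simp [Op.pw]
  | succ k ih =>
    change T.pw k (T.op (c.Φ g x)) = _
    rw [(c.Φ_dom g hg hd.exists_abs_id_mul_le x).2, ih (measurable_id'.fun_mul hg) hd.id_mul]
    simp only [pow_succ, mul_assoc]

theorem Φ_pw_apply (hT : T.Symmetric) (k : ℕ) {g : ℝ → ℝ} (hg : Measurable g)
    (hd : RapidDecayFrom a g) {x : 𝓗} (hx : x ∈ T.Dinf) :
    c.Φ g (T.pw k x) = c.Φ (fun t => t ^ k * g t) x := by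
  induction k generalizing g with
  | zero => simp [Op.pw]
  | succ k ih =>
    rw [Op.pw_succ',
      c.Φ_op_apply hT hg hd.exists_abs_id_mul_le (T.pw_mem_dom_of_mem_Dinf hx k),
      ih (measurable_id'.fun_mul hg) hd.id_mul]
    simp only [pow_succ, mul_assoc]

noncomputable def regHam (L : ℝ) (x : 𝓗) : 𝓗 := c.Q L (T.op (c.Q L x))

theorem regHam_Φ_sub_op_Φ {g : ℝ → ℝ} (hg : Measurable g)
    (hb : ∃ M, ∀ t, a ≤ t → |t * g t| ≤ M) (L : ℝ) (x : 𝓗) :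
    c.regHam L (c.Φ g x) - T.op (c.Φ g x) = c.Φ (regDefect a L g) x := by
  have hχ := measurable_cutoff a L
  have hχg : Measurable fun t => cutoff a L t * g t := hχ.fun_mul hg
  have hbχg : ∃ M, ∀ t, a ≤ t → |t * (cutoff a L t * g t)| ≤ M :=
    hb.imp fun M hM t ht =>
      calc |t * (cutoff a L t * g t)| = |cutoff a L t| * |t * g t| := by
            rw [← abs_mul]; ring_nf
        _ ≤ 1 * M := mul_le_mul (abs_cutoff_le_one a L t) (hM t ht) (abs_nonneg _) zero_le_one
        _ = M := one_mul M
  rw [regHam, Q_eq, c.Φ_Φ_apply hχ hg, (c.Φ_dom _ hχg hbχg x).2,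
    c.Φ_Φ_apply hχ (measurable_id'.fun_mul hχg), (c.Φ_dom g hg hb x).2,
    ← sub_apply,
    ← c.Φ_sub (hχ.fun_mul (measurable_id'.fun_mul hχg)) (measurable_id'.fun_mul hg)]
  congr 2 with t
  rw [regDefect]; ring

theorem Φ_regHam_sub_op (hT : T.Symmetric) {g : ℝ → ℝ} (hg : Measurable g)
    (hb : ∃ M, ∀ t, a ≤ t → |t * g t| ≤ M) (L : ℝ) {x : 𝓗} (hx : x ∈ T.dom) :
    c.Φ g (c.regHam L x - T.op x) = c.Φ (regDefect a L g) x := by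
  have hχ := measurable_cutoff a L
  have hχχ : Measurable fun t => cutoff a L t * (t * cutoff a L t) :=
    hχ.fun_mul (measurable_id'.fun_mul hχ)
  rw [map_sub, regHam, Q_eq, (c.Φ_dom _ hχ ⟨_, fun t _ => abs_mul_cutoff_le a L t⟩ x).2,
    c.Φ_Φ_apply hχ (measurable_id'.fun_mul hχ), c.Φ_Φ_apply hg hχχ, c.Φ_op_apply hT hg hb hx,
    ← sub_apply, ← c.Φ_sub (hg.fun_mul hχχ) (measurable_id'.fun_mul hg)]
  congr 2 with t
  rw [regDefect]; ring

theorem tendsto_opNormOn_zero {D : Set 𝓗} {A : ℝ → 𝓗 → 𝓗} {h : ℝ → ℝ → ℝ} {B : ℝ → ℝ}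
    (hA : ∀ L, ∀ x ∈ D, A L x = c.Φ (h L) x)
    (hh : ∀ᶠ L in atTop, ∀ t, a ≤ t → |h L t| ≤ B L) (hB : Tendsto B atTop (𝓝 0)) :
    Tendsto (fun L => opNormOn D (A L)) atTop (𝓝 0) := by
  refine squeeze_zero' (.of_forall fun L => opNormOn_nonneg D (A L)) ?_ hB
  filter_upwards [hh] with L hL
  refine opNormOn_le ((abs_nonneg _).trans (hL a le_rfl)) fun x hx => ?_
  rw [hA L x hx]
  exact c.Φ_norm _ _ hL x

end FnCalc

end Regularization

variable {𝓗 : Type*} [NormedAddCommGroup 𝓗] [InnerProductSpace ℂ 𝓗] [CompleteSpace 𝓗]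

theorem stmt1_general (H0 : Op 𝓗) (hsa : H0.IsSelfAdjoint)
    (S0 : FnCalc H0 1) (D : Set 𝓗) (hD : D = H0.Dinf) :
    ∀ f : ℝ → ℝ, IsInF f → ∀ k : ℕ,
      Filter.Tendsto (fun L : ℝ => opNormOn D (fun φ =>
          H0.pw k (S0.Q L (H0.op (S0.Q L (S0.Φ f φ))) - H0.op (S0.Φ f φ))))
        Filter.atTop (nhds 0) ∧
      Filter.Tendsto (fun L : ℝ => opNormOn D (fun φ =>
          S0.Φ f (S0.Q L (H0.op (S0.Q L (H0.pw k φ))) - H0.op (H0.pw k φ))))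
        Filter.atTop (nhds 0) := by
  intro f hf k
  have hfm : Measurable f := hf.1.measurable
  have hfd : RapidDecayFrom 1 f := hf.rapidDecayFrom zero_le_one
  have hf1 := hfd.exists_abs_id_mul_le
  have hdm (L : ℝ) := measurable_regDefect hfm 1 L
  have hdd (L : ℝ) := rapidDecayFrom_regDefect hfd 1 L
  obtain ⟨M, hM⟩ := hfd (k + 2)
  have hbound : ∀ᶠ L in Filter.atTop, ∀ t, 1 ≤ t → |t ^ k * regDefect 1 L f t| ≤ M / L :=
    (Filter.eventually_gt_atTop 0).mono fun L hL t ht => abs_pow_mul_regDefect_le hL hM ht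
  have hML : Filter.Tendsto (fun L : ℝ => M / L) Filter.atTop (nhds 0) :=
    tendsto_const_nhds.div_atTop Filter.tendsto_id
  constructor
  · refine S0.tendsto_opNormOn_zero (fun L φ _ => ?_) hbound hML
    exact (congrArg (H0.pw k) (S0.regHam_Φ_sub_op_Φ hfm hf1 L φ)).trans
      (S0.pw_Φ_apply k (hdm L) (hdd L) φ)
  · refine S0.tendsto_opNormOn_zero (fun L φ hφ => ?_) hbound hML
    rw [hD] at hφ
    exact (S0.Φ_regHam_sub_op hsa.2.1 hfm hf1 L (H0.pw_mem_dom_of_mem_Dinf hφ k)).trans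
      (S0.Φ_pw_apply hsa.2.1 k (hdm L) (hdd L) hφ)

/-- For a self-adjoint `H0 ≥ 1` with `D = D^∞(H0)`, the regularized
Hamiltonians `H_L = Q⁰_L H0 Q⁰_L` converge to `H0` in the quasi-uniform topology `τ_*`:
for every `f ∈ F` and `k ∈ ℕ ∪ {0}`, both `‖H0^k (H_L - H0) f(H0)‖ → 0` and
`‖f(H0) (H_L - H0) H0^k‖ → 0` as `L → ∞`. -/
theorem stmt1 (H0 : Op 𝓗) (hsa : H0.IsSelfAdjoint) (hge : H0.GeOne)
    (S0 : FnCalc H0 1) (D : Set 𝓗) (hD : D = H0.Dinf) :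
    ∀ f : ℝ → ℝ, IsInF f → ∀ k : ℕ,
      Filter.Tendsto (fun L : ℝ => opNormOn D (fun φ =>
          H0.pw k (S0.Q L (H0.op (S0.Q L (S0.Φ f φ))) - H0.op (S0.Φ f φ))))
        Filter.atTop (nhds 0) ∧
      Filter.Tendsto (fun L : ℝ => opNormOn D (fun φ =>
          S0.Φ f (S0.Q L (H0.op (S0.Q L (H0.pw k φ))) - H0.op (H0.pw k φ))))
        Filter.atTop (nhds 0) :=
  stmt1_general H0 hsa S0 D hD

end Paper
end

section
/- Let H0 be a self-adjoint operator in a Hilbert space H, let B be a symmetric operator with D(H0) ⊆ D(B) such that H = H0 + B is self-adjoint on D(H0), and assume D^∞(H0) = D^∞(H) =: D. Then the graph topologies t_{H0} and t_H on D are equivalent; that is, the topology defined by the seminorms φ ↦ ‖H0^n φ‖ (n = 0,1,2,…) coincides with the topology defined by the seminorms φ ↦ ‖H^n φ‖ (n = 0,1,2,…). -/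
open scoped ComplexInnerProductSpace

namespace Paper

variable {𝓗 : Type*} [NormedAddCommGroup 𝓗] [InnerProductSpace ℂ 𝓗]

/-!
Since `S` is self-adjoint, hence closed, `φ ↦ (Sⁿ φ)ₙ` embeds `D^∞(S)[t_S]` as a closed subspace
of `𝓗^ℕ`; so it is a Fréchet space and therefore barrelled. If `T` is symmetric and leaves
`D = D^∞(S)` invariant, then `‖Tⁿ φ‖ = sup {|⟪Tⁿ ψ, φ⟫| : ψ ∈ D, ‖ψ‖ ≤ 1}` is a pointwise bounded
supremum of `t_S`-continuous seminorms, hence `t_S`-continuous by Banach–Steinhaus, i.e.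
`t_T ⊆ t_S`. Applied to `(S, T) = (H₀, H)` and `(H, H₀)` this gives `t_{H₀} = t_H`.
-/

open Topology TopologicalSpace

theorem _root_.Topology.IsClosedEmbedding.barrelledSpace {𝕜 E F : Type*}
    [NontriviallyNormedField 𝕜] [AddCommGroup E] [Module 𝕜 E] [TopologicalSpace E] [AddCommGroup F] [Module 𝕜 F]
    [TopologicalSpace F] [IsTopologicalAddGroup F] [ContinuousSMul 𝕜 F]
    [IsCompletelyPseudoMetrizableSpace F] {L : E →ₗ[𝕜] F} (hL : IsClosedEmbedding L) :
    BarrelledSpace 𝕜 E :=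
  have := hL.isInducing.topologicalAddGroup L
  have := hL.isInducing.continuousSMul continuous_id (L.map_smul _ _)
  have := hL.IsCompletelyPseudoMetrizableSpace
  inferInstance

section WeakToStrong

variable {𝕜 E F : Type*} [RCLike 𝕜] [NormedAddCommGroup F] [InnerProductSpace 𝕜 F]

theorem _root_.norm_eq_iSup_norm_inner_of_mem (M : Submodule 𝕜 F) {x : F} (hx : x ∈ M) :
    ‖x‖ = ⨆ y : {y : F // y ∈ M ∧ ‖y‖ ≤ 1}, ‖inner 𝕜 (y : F) x‖ := by
  have hle : ∀ y : {y : F // y ∈ M ∧ ‖y‖ ≤ 1}, ‖inner 𝕜 (y : F) x‖ ≤ ‖x‖ := fun y =>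
    (norm_inner_le_norm _ _).trans (mul_le_of_le_one_left (norm_nonneg x) y.2.2)
  have : Nonempty {y : F // y ∈ M ∧ ‖y‖ ≤ 1} := ⟨⟨0, M.zero_mem, by simp⟩⟩
  refine le_antisymm ?_ (ciSup_le hle)
  rcases eq_or_ne x 0 with rfl | hx0
  · exact norm_zero (E := F) ▸ Real.iSup_nonneg fun _ => norm_nonneg _
  have hx' : ‖x‖ ≠ 0 := norm_ne_zero_iff.mpr hx0
  let u : {y : F // y ∈ M ∧ ‖y‖ ≤ 1} :=
    ⟨(‖x‖⁻¹ : 𝕜) • x, M.smul_mem _ hx, by simp [norm_smul, hx']⟩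
  have hu : ‖inner 𝕜 (u : F) x‖ = ‖x‖ := by
    simp [u, inner_smul_left, inner_self_eq_norm_sq_to_K, hx', sq]
  exact hu.symm.le.trans (le_ciSup ⟨‖x‖, Set.forall_mem_range.mpr hle⟩ u)

variable [AddCommGroup E] [Module 𝕜 E] [TopologicalSpace E] [IsTopologicalAddGroup E]
  [BarrelledSpace 𝕜 E]

theorem _root_.LinearMap.continuous_of_continuous_inner (f : E →ₗ[𝕜] F) (M : Submodule 𝕜 F)
    (hfM : ∀ x, f x ∈ M) (hf : ∀ y ∈ M, Continuous fun x => inner 𝕜 y (f x)) :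
    Continuous f := by
  let p : {y : F // y ∈ M ∧ ‖y‖ ≤ 1} → Seminorm 𝕜 E := fun y =>
    (normSeminorm 𝕜 𝕜).comp (innerₛₗ 𝕜 (y : F) ∘ₗ f)
  have hp_le : ∀ y x, p y x ≤ ‖f x‖ := fun y x =>
    (norm_inner_le_norm _ _).trans (mul_le_of_le_one_left (norm_nonneg _) y.2.2)
  have hbdd : BddAbove (Set.range p) :=
    Seminorm.bddAbove_range_iff.mpr fun x => ⟨‖f x‖, Set.forall_mem_range.mpr (hp_le · x)⟩
  have hsup : (⨆ y, ⇑(p y)) = fun x => ‖f x‖ := by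
    funext x
    rw [iSup_apply, norm_eq_iSup_norm_inner_of_mem M (hfM x)]
    rfl
  have hnorm : Continuous fun x => ‖f x‖ :=
    hsup ▸ Seminorm.continuous_iSup p (fun y => (hf y y.2.1).norm) hbdd
  refine continuous_of_continuousAt_zero f ?_
  rw [ContinuousAt, map_zero, tendsto_zero_iff_norm_tendsto_zero]
  simpa using hnorm.tendsto 0

end WeakToStrong

namespace Op

section

variable (T : Op 𝓗)

theorem pw_zero_apply (x : 𝓗) : T.pw 0 x = x := rfl

theorem pw_succ_apply (n : ℕ) (x : 𝓗) : T.pw (n + 1) x = T.pw n (T.op x) :=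
  Function.iterate_succ_apply _ _ _

theorem pw_succ_apply' (n : ℕ) (x : 𝓗) : T.pw (n + 1) x = T.op (T.pw n x) :=
  Function.iterate_succ_apply' _ _ _

theorem mem_domPow_iff {x : 𝓗} {n : ℕ} : x ∈ T.domPow n ↔ ∀ k < n, T.pw k x ∈ T.dom := by
  induction n generalizing x with
  | zero => simp [domPow]
  | succ n ih =>
    simp only [domPow, Set.mem_ofPred_eq, ih, Nat.forall_lt_succ_left, pw_succ_apply]
    rfl

theorem mem_Dinf_iff {x : 𝓗} : x ∈ T.Dinf ↔ ∀ n, T.pw n x ∈ T.dom := by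
  simp only [Dinf, Set.mem_iInter, mem_domPow_iff]
  exact ⟨fun h n => h (n + 1) n n.lt_succ_self, fun h _ k _ => h k⟩

theorem Dinf_subset_dom : T.Dinf ⊆ T.dom := fun _ hx => (T.mem_Dinf_iff.mp hx) 0

theorem mapsTo_op_Dinf : Set.MapsTo T.op T.Dinf T.Dinf := fun x hx =>
  T.mem_Dinf_iff.mpr fun n => by
    simpa only [pw_succ_apply] using T.mem_Dinf_iff.mp hx (n + 1)

theorem coe_pow_op (n : ℕ) : ⇑(T.op ^ n) = T.pw n := Module.End.coe_pow _ _

def DinfSubmodule : Submodule ℂ 𝓗 :=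
  (⨅ n, T.dom.comap (T.op ^ n)).copy T.Dinf <| by
    ext x
    simp [mem_Dinf_iff, coe_pow_op]

def graphSeq : T.DinfSubmodule →ₗ[ℂ] (ℕ → 𝓗) :=
  LinearMap.pi fun n => (T.op ^ n) ∘ₗ T.DinfSubmodule.subtype

theorem graphSeq_apply (φ : T.DinfSubmodule) (n : ℕ) : T.graphSeq φ n = T.pw n φ := by
  simp [graphSeq, coe_pow_op]

theorem range_graphSeq :
    Set.range T.graphSeq = {ψ | ∀ n, ψ n ∈ T.dom ∧ T.op (ψ n) = ψ (n + 1)} := by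
  ext ψ
  constructor
  · rintro ⟨φ, rfl⟩ n
    simp only [graphSeq_apply, pw_succ_apply', and_true]
    exact T.mem_Dinf_iff.mp φ.2 n
  · intro hψ
    have hpw : ∀ n, T.pw n (ψ 0) = ψ n := by
      intro n
      induction n with
      | zero => rfl
      | succ n ih => rw [pw_succ_apply', ih, (hψ n).2]
    have hmem : ψ 0 ∈ T.Dinf := T.mem_Dinf_iff.mpr fun n => hpw n ▸ (hψ n).1
    exact ⟨⟨ψ 0, hmem⟩, funext fun n => (graphSeq_apply _ _ _).trans (hpw n)⟩

theorem graphTopOn_Dinf_eq_induced :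
    T.graphTopOn T.Dinf = TopologicalSpace.induced T.graphSeq inferInstance := by
  simp only [graphTopOn, Pi.topologicalSpace, induced_iInf, induced_compose]
  refine iInf_congr fun n => ?_
  congr 1
  funext φ
  exact (graphSeq_apply T φ n).symm

theorem graphSeq_injective : Function.Injective T.graphSeq := fun φ ψ h =>
  Subtype.ext <| by simpa only [graphSeq_apply, pw_zero_apply] using congrFun h 0

end

section

variable {T : Op 𝓗}

theorem IsSelfAdjoint.isClosed_graph (hT : T.IsSelfAdjoint) :
    IsClosed {p : 𝓗 × 𝓗 | p.1 ∈ T.dom ∧ T.op p.1 = p.2} := by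
  have hgraph : {p : 𝓗 × 𝓗 | p.1 ∈ T.dom ∧ T.op p.1 = p.2} =
      ⋂ x ∈ T.dom, {p | ⟪T.op x, p.1⟫ = ⟪x, p.2⟫} := by
    ext ⟨y, z⟩
    simp only [Set.mem_ofPred_eq, Set.mem_iInter]
    refine ⟨?_, hT.2.2 y z⟩
    rintro ⟨hy, rfl⟩ x hx
    exact hT.2.1 x hx y hy
  rw [hgraph]
  exact isClosed_biInter fun x _ => isClosed_eq (by fun_prop) (by fun_prop)

theorem IsSelfAdjoint.isClosed_range_graphSeq (hT : T.IsSelfAdjoint) :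
    IsClosed (Set.range T.graphSeq) := by
  rw [range_graphSeq]
  simp only [Set.ofPred_forall]
  exact isClosed_iInter fun n =>
    hT.isClosed_graph.preimage (f := fun ψ : ℕ → 𝓗 => (ψ n, ψ (n + 1))) (by fun_prop)

theorem IsSelfAdjoint.isClosedEmbedding_graphSeq (hT : T.IsSelfAdjoint) :
    letI : TopologicalSpace T.DinfSubmodule := T.graphTopOn T.Dinf
    IsClosedEmbedding T.graphSeq :=
  letI : TopologicalSpace T.DinfSubmodule := T.graphTopOn T.Dinf
  ⟨⟨⟨T.graphTopOn_Dinf_eq_induced⟩, T.graphSeq_injective⟩, hT.isClosed_range_graphSeq⟩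

theorem Symmetric.inner_pw (hT : T.Symmetric) {D : Set 𝓗} (hD : D ⊆ T.dom)
    (hTD : Set.MapsTo T.op D D) (n : ℕ) {x y : 𝓗} (hx : x ∈ D) (hy : y ∈ D) :
    ⟪T.pw n x, y⟫ = ⟪x, T.pw n y⟫ := by
  induction n generalizing x with
  | zero => rfl
  | succ n ih =>
    rw [pw_succ_apply, ih (hTD hx), hT x (hD hx) (T.pw n y) (hD (hTD.iterate n hy)), pw_succ_apply']

end

theorem IsSelfAdjoint.graphTopOn_Dinf_le {S T : Op 𝓗} [CompleteSpace 𝓗] (hS : S.IsSelfAdjoint)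
    (hT : T.Symmetric) (hdom : S.Dinf ⊆ T.dom) (hmaps : Set.MapsTo T.op S.Dinf S.Dinf) :
    S.graphTopOn S.Dinf ≤ T.graphTopOn S.Dinf := by
  let : TopologicalSpace S.DinfSubmodule := S.graphTopOn S.Dinf
  have hemb := hS.isClosedEmbedding_graphSeq
  have := hemb.isInducing.topologicalAddGroup S.graphSeq
  have := hemb.barrelledSpace
  have hval : Continuous fun φ : S.DinfSubmodule => (φ : 𝓗) :=
    (continuous_apply 0).comp hemb.continuous
  refine le_iInf fun n => continuous_iff_le_induced.mp ?_
  have hcont : Continuous ((T.op ^ n) ∘ₗ S.DinfSubmodule.subtype) := by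
    refine LinearMap.continuous_of_continuous_inner _ S.DinfSubmodule (fun φ => ?_) fun y hy => ?_
    · rw [LinearMap.comp_apply, coe_pow_op]
      exact hmaps.iterate n φ.2
    · simp only [LinearMap.coe_comp, coe_pow_op, Submodule.coe_subtype, Function.comp_apply]
      exact (continuous_const.inner hval).congr fun φ => hT.inner_pw hdom hmaps n hy φ.2
  rwa [LinearMap.coe_comp, coe_pow_op] at hcont

end Op

variable {𝓗 : Type*} [NormedAddCommGroup 𝓗] [InnerProductSpace ℂ 𝓗] [CompleteSpace 𝓗]

theorem stmt2_general (H0 B : Op 𝓗) (hsa0 : H0.IsSelfAdjoint)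
    (hsaH : (H0.pert B).IsSelfAdjoint)
    (D : Set 𝓗) (hD0 : D = H0.Dinf) (hDH : D = (H0.pert B).Dinf) :
    H0.graphTopOn D = (H0.pert B).graphTopOn D := by
  subst hD0
  refine le_antisymm (hsa0.graphTopOn_Dinf_le hsaH.2.1 H0.Dinf_subset_dom ?_) ?_
  · exact hDH ▸ (H0.pert B).mapsTo_op_Dinf
  · rw [hDH]
    exact hsaH.graphTopOn_Dinf_le hsa0.2.1 (H0.pert B).Dinf_subset_dom (hDH ▸ H0.mapsTo_op_Dinf)

/-- If `H0` is self-adjoint, `B` is symmetric with `D(H0) ⊆ D(B)`,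
`H = H0 + B` is self-adjoint on `D(H0)`, and `D^∞(H0) = D^∞(H) =: D`, then the graph
topologies `t_{H0}` and `t_H` on `D` coincide. -/
theorem stmt2 (H0 B : Op 𝓗) (hsa0 : H0.IsSelfAdjoint)
    (hBsymm : B.Symmetric) (hdomB : (H0.dom : Set 𝓗) ⊆ B.dom)
    (hsaH : (H0.pert B).IsSelfAdjoint)
    (D : Set 𝓗) (hD0 : D = H0.Dinf) (hDH : D = (H0.pert B).Dinf) :
    H0.graphTopOn D = (H0.pert B).graphTopOn D :=
  stmt2_general H0 B hsa0 hsaH D hD0 hDH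

end Paper
end

section
/- Let H0 be a self-adjoint operator and B a symmetric perturbation with D(H0) ⊆ D(B) such that H = H0 + B is self-adjoint on D(H0). Assume: (i) ⟨H0 f, B g⟩ = ⟨B f, H0 g⟩ for all f, g ∈ D^∞(H0); (ii) H is essentially self-adjoint on D^∞(H0); (iii) ‖H0 f‖ ≤ ‖H f‖ for all f ∈ D^∞(H0). Then D^∞(H0) = D^∞(H). -/
open scoped ComplexInnerProductSpace

namespace Paper

variable {𝓗 : Type*} [NormedAddCommGroup 𝓗] [InnerProductSpace ℂ 𝓗]

/-! Condition (iii) lets the graph norm of `H` control that of `H0` on `D^∞(H0)`; since `H0` is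
closed, sequences from `D^∞(H0)` converging in the graph norm of `H` converge in that of `H0` as
well. Along such sequences the weak commutation (i) extends to `⟪H g, H0 x⟫ = ⟪H0 g, H x⟫` for
`g ∈ D^∞(H0)`, `x ∈ D(H0)`, and self-adjointness upgrades this to strong commutation: if `T` is
one of `H`, `H0` and `S` the other, then `S x ∈ D(T)` and `T S x = S T x` whenever
`x, T x ∈ D(T)`. Such an `S` maps `D^∞(T)` into itself, which gives both inclusions. -/

open Filter Topology

namespace Op

theorem sub_mem_domPow (T : Op 𝓗) :
    ∀ n, ∀ x ∈ T.domPow n, ∀ y ∈ T.domPow n, x - y ∈ T.domPow n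
  | 0, _, _, _, _ => trivial
  | n + 1, x, hx, y, hy => ⟨T.dom.sub_mem hx.1 hy.1, by
      rw [map_sub]
      exact T.sub_mem_domPow n _ hx.2 _ hy.2⟩

theorem sub_mem_Dinf (T : Op 𝓗) {x y : 𝓗} (hx : x ∈ T.Dinf) (hy : y ∈ T.Dinf) :
    x - y ∈ T.Dinf :=
  Set.mem_iInter.2 fun n =>
    T.sub_mem_domPow n x (Set.mem_iInter.1 hx n) y (Set.mem_iInter.1 hy n)

theorem mem_Dinf_iff_s12 {T : Op 𝓗} {x : 𝓗} : x ∈ T.Dinf ↔ x ∈ T.dom ∧ T.op x ∈ T.Dinf := by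
  simp only [Dinf, Set.mem_iInter]
  refine ⟨fun h => ⟨(h 1).1, fun n => (h (n + 1)).2⟩, fun h n => ?_⟩
  cases n with
  | zero => trivial
  | succ n => exact ⟨h.1, h.2 n⟩

theorem subset_Dinf {T : Op 𝓗} {S : Set 𝓗} (hS : ∀ x ∈ S, x ∈ T.dom ∧ T.op x ∈ S) :
    S ⊆ T.Dinf := by
  suffices ∀ n, ∀ x ∈ S, x ∈ T.domPow n from fun x hx => Set.mem_iInter.2 fun n => this n x hx
  intro n
  induction n with
  | zero => exact fun _ _ => trivial
  | succ n ih => exact fun x hx => ⟨(hS x hx).1, ih _ (hS x hx).2⟩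

theorem image_Dinf_subset {S T : Op 𝓗}
    (hcomm : ∀ x ∈ T.dom, T.op x ∈ T.dom → S.op x ∈ T.dom ∧ T.op (S.op x) = S.op (T.op x)) :
    S.op '' T.Dinf ⊆ T.Dinf := by
  refine subset_Dinf ?_
  rintro _ ⟨x, hx, rfl⟩
  obtain ⟨hxT, hTx⟩ := mem_Dinf_iff_s12.1 hx
  obtain ⟨hSx, hTSx⟩ := hcomm x hxT (mem_Dinf_iff_s12.1 hTx).1
  exact ⟨hSx, hTSx ▸ Set.mem_image_of_mem _ hTx⟩

theorem Dinf_subset_Dinf {S T : Op 𝓗} (hdom : T.dom ≤ S.dom)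
    (hcomm : ∀ x ∈ T.dom, T.op x ∈ T.dom → S.op x ∈ T.dom ∧ T.op (S.op x) = S.op (T.op x)) :
    T.Dinf ⊆ S.Dinf :=
  subset_Dinf fun x hx => ⟨hdom (mem_Dinf_iff_s12.1 hx).1, image_Dinf_subset hcomm ⟨x, hx, rfl⟩⟩

def IsClosed (T : Op 𝓗) : Prop :=
  ∀ (u : ℕ → 𝓗) (x z : 𝓗), (∀ n, u n ∈ T.dom) → Tendsto u atTop (𝓝 x) →
    Tendsto (fun n => T.op (u n)) atTop (𝓝 z) → x ∈ T.dom ∧ T.op x = z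

theorem IsSelfAdjoint.isClosed {T : Op 𝓗} (hT : T.IsSelfAdjoint) : T.IsClosed := by
  intro u x z hu hux hTu
  refine hT.2.2 x z fun w hw => tendsto_nhds_unique ?_ (tendsto_const_nhds.inner hTu)
  exact (tendsto_const_nhds.inner hux).congr fun n => hT.2.1 w hw (u n) (hu n)

theorem IsClosed.tendsto_op_of_norm_le [CompleteSpace 𝓗] {S T : Op 𝓗} (hT : T.IsClosed)
    {D0 : Set 𝓗} (hD0 : D0 ⊆ T.dom) (hsub : ∀ f ∈ D0, ∀ g ∈ D0, f - g ∈ D0)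
    (hle : ∀ f ∈ D0, ‖T.op f‖ ≤ ‖S.op f‖) {u : ℕ → 𝓗} (hu : ∀ n, u n ∈ D0) {x y : 𝓗}
    (hux : Tendsto u atTop (𝓝 x)) (hSu : Tendsto (fun n => S.op (u n)) atTop (𝓝 y)) :
    x ∈ T.dom ∧ Tendsto (fun n => T.op (u n)) atTop (𝓝 (T.op x)) := by
  have hcauchy : CauchySeq fun n => T.op (u n) := by
    refine Metric.cauchySeq_iff.2 fun ε hε => ?_
    obtain ⟨N, hN⟩ := Metric.cauchySeq_iff.1 hSu.cauchySeq ε hε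
    refine ⟨N, fun m hm n hn => lt_of_le_of_lt ?_ (hN m hm n hn)⟩
    simpa only [dist_eq_norm, map_sub] using hle _ (hsub _ (hu m) _ (hu n))
  obtain ⟨z, hz⟩ := cauchySeq_tendsto_of_complete hcauchy
  obtain ⟨hx, rfl⟩ := hT u x z (fun n => hD0 (hu n)) hux hz
  exact ⟨hx, hz⟩

theorem inner_pert_op_comm (T B : Op 𝓗) {f g : 𝓗}
    (h : ⟪T.op f, B.op g⟫ = ⟪B.op f, T.op g⟫) :
    ⟪(T.pert B).op f, T.op g⟫ = ⟪T.op f, (T.pert B).op g⟫ := by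
  simp only [pert, LinearMap.add_apply, inner_add_left, inner_add_right, h]

theorem domPow_one (T : Op 𝓗) : T.domPow 1 = T.dom := by
  ext x
  simp [domPow]

theorem pw_one (T : Op 𝓗) : T.pw 1 = T.op := rfl

end Op

theorem isCorePow_one_iff {T : Op 𝓗} {D0 : Set 𝓗} :
    IsCorePow T 1 D0 ↔ D0 ⊆ T.dom ∧ ∀ x ∈ T.dom, ∃ u : ℕ → 𝓗, (∀ n, u n ∈ D0) ∧
      Tendsto u atTop (𝓝 x) ∧ Tendsto (fun n => T.op (u n)) atTop (𝓝 (T.op x)) := by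
  rw [IsCorePow, T.domPow_one, T.pw_one]
  exact Iff.rfl

/-- `hweak` and the symmetry of `S` give `⟪T y, S x⟫ = ⟪y, S (T x)⟫` for `y ∈ D0`, hence for
all `y ∈ D(T)` as `D0` is a core, so `S x ∈ D(T*) = D(T)`. -/
theorem Op.IsSelfAdjoint.op_comm_of_inner_comm {S T : Op 𝓗} (hT : T.IsSelfAdjoint)
    (hS : S.Symmetric) (hdom : T.dom ≤ S.dom) {D0 : Set 𝓗} (hcore : IsCorePow T 1 D0)
    (hweak : ∀ g ∈ D0, ∀ x ∈ T.dom, ⟪T.op g, S.op x⟫ = ⟪S.op g, T.op x⟫) :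
    ∀ x ∈ T.dom, T.op x ∈ T.dom → S.op x ∈ T.dom ∧ T.op (S.op x) = S.op (T.op x) := by
  intro x hx hTx
  obtain ⟨hD0, happrox⟩ := isCorePow_one_iff.1 hcore
  refine hT.2.2 _ _ fun y hy => ?_
  obtain ⟨g, hg, hgy, hTg⟩ := happrox y hy
  refine tendsto_nhds_unique ((hTg.inner tendsto_const_nhds).congr fun m => ?_)
    (hgy.inner tendsto_const_nhds)
  rw [hweak _ (hg m) x hx]
  exact hS _ (hdom (hD0 (hg m))) _ (hdom hTx)

variable {𝓗 : Type*} [NormedAddCommGroup 𝓗] [InnerProductSpace ℂ 𝓗] [CompleteSpace 𝓗]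

theorem stmt12_general (H0 B : Op 𝓗) (hsa0 : H0.IsSelfAdjoint)
    (hsaH : (H0.pert B).IsSelfAdjoint)
    (hcomm : ∀ f ∈ H0.Dinf, ∀ g ∈ H0.Dinf, ⟪H0.op f, B.op g⟫ = ⟪B.op f, H0.op g⟫)
    (hess : IsCorePow (H0.pert B) 1 H0.Dinf)
    (hbound : ∀ f ∈ H0.Dinf, ‖H0.op f‖ ≤ ‖(H0.pert B).op f‖) :
    H0.Dinf = (H0.pert B).Dinf := by
  set H := H0.pert B
  have hD0 : H0.Dinf ⊆ H0.dom := fun x hx => (Op.mem_Dinf_iff_s12.1 hx).1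
  have hjoint : ∀ x ∈ H0.dom, ∃ u : ℕ → 𝓗, (∀ n, u n ∈ H0.Dinf) ∧ Tendsto u atTop (𝓝 x) ∧
      Tendsto (fun n => H.op (u n)) atTop (𝓝 (H.op x)) ∧
      Tendsto (fun n => H0.op (u n)) atTop (𝓝 (H0.op x)) := by
    intro x hx
    obtain ⟨u, hu, hux, hHu⟩ := (isCorePow_one_iff.1 hess).2 x hx
    refine ⟨u, hu, hux, hHu, (hsa0.isClosed.tendsto_op_of_norm_le hD0 ?_ hbound hu hux hHu).2⟩
    exact fun f hf g hg => H0.sub_mem_Dinf hf hg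
  have hweak : ∀ g ∈ H0.Dinf, ∀ x ∈ H0.dom, ⟪H.op g, H0.op x⟫ = ⟪H0.op g, H.op x⟫ := by
    intro g hg x hx
    obtain ⟨u, hu, -, hHu, hH0u⟩ := hjoint x hx
    refine tendsto_nhds_unique ((tendsto_const_nhds.inner hH0u).congr fun n => ?_)
      (tendsto_const_nhds.inner hHu)
    exact H0.inner_pert_op_comm B (hcomm g hg (u n) (hu n))
  have hcore0 : IsCorePow H0 1 H0.Dinf := isCorePow_one_iff.2
    ⟨hD0, fun x hx => (hjoint x hx).imp fun _ ⟨hu, hux, _, hH0u⟩ => ⟨hu, hux, hH0u⟩⟩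
  refine subset_antisymm (Op.Dinf_subset_Dinf (T := H0) le_rfl ?_)
    (Op.Dinf_subset_Dinf (T := H) le_rfl ?_)
  · exact hsa0.op_comm_of_inner_comm hsaH.2.1 le_rfl hcore0 fun g hg x hx =>
      (hweak g hg x hx).symm
  · exact hsaH.op_comm_of_inner_comm hsa0.2.1 le_rfl hess hweak

/-- (Corollary) If (i) `⟨H0 f, B g⟩ = ⟨B f, H0 g⟩` for all
`f, g ∈ D^∞(H0)`, (ii) `H` is essentially self-adjoint on `D^∞(H0)`, and (iii)
`‖H0 f‖ ≤ ‖H f‖` for all `f ∈ D^∞(H0)`, then `D^∞(H0) = D^∞(H)`. -/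
theorem stmt12 (H0 B : Op 𝓗) (hsa0 : H0.IsSelfAdjoint)
    (hBsymm : B.Symmetric) (hdomB : (H0.dom : Set 𝓗) ⊆ B.dom)
    (hsaH : (H0.pert B).IsSelfAdjoint)
    (hcomm : ∀ f ∈ H0.Dinf, ∀ g ∈ H0.Dinf, ⟪H0.op f, B.op g⟫ = ⟪B.op f, H0.op g⟫)
    (hess : IsCorePow (H0.pert B) 1 H0.Dinf)
    (hbound : ∀ f ∈ H0.Dinf, ‖H0.op f‖ ≤ ‖(H0.pert B).op f‖) :
    H0.Dinf = (H0.pert B).Dinf :=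
  stmt12_general H0 B hsa0 hsaH hcomm hess hbound

end Paper
end
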